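/- arXiv:1808.10850 — 3 statements merged into one kernel-verified Lean document; each statement's English description precedes it below -/
import Mathlib

section
/- Discrete Poincaré lemma for 1-forms on Z^s: if A_α : Z^s → R/2πZ (α = 1,…,s) satisfy d_α A_β = d_β A_α for all α, β (i.e., the field vanishes), then there exists χ : Z^s → R/2πZ with A_α = d_α χ for all α. -/
def latUnit {s : ℕ} (α : Fin s) : Fin s → ℤ := Pi.single α 1

/-- Discrete derivative in direction `α`. -/
def dd {s : ℕ} {A : Type*} [AddCommGroup A] (α : Fin s)
    (f : (Fin s → ℤ) → A) : (Fin s → ℤ) → A :=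
  fun x => f (x + latUnit α) - f x

section Aux

variable {G : Type*} [AddCommGroup G]

/-- Integer antiderivative of `h`, normalized to vanish at `0`. -/
def isum (h : ℤ → G) : ℤ → G
  | Int.ofNat n => ∑ i ∈ Finset.range n, h i
  | Int.negSucc n => - ∑ i ∈ Finset.range (n + 1), h (Int.negSucc i)

lemma isum_zero (h : ℤ → G) : isum h 0 = 0 := by
  show isum h (Int.ofNat 0) = 0
  simp [isum]

lemma isum_step (h : ℤ → G) (t : ℤ) : isum h (t + 1) - isum h t = h t := by
  cases t with
  | ofNat n =>
      show isum h (Int.ofNat (n + 1)) - isum h (Int.ofNat n) = _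
      simp [isum, Finset.sum_range_succ]
  | negSucc n =>
      cases n with
      | zero =>
          show isum h (Int.ofNat 0) - isum h (Int.negSucc 0) = _
          simp [isum]
      | succ m =>
          have harg : Int.negSucc (m + 1) + 1 = Int.negSucc m := by
            rw [Int.negSucc_eq, Int.negSucc_eq]; push_cast; ring
          rw [harg]
          show isum h (Int.negSucc m) - isum h (Int.negSucc (m + 1)) = _
          simp [isum, Finset.sum_range_succ]

lemma int_ext (F Gf : ℤ → G) (h0 : F 0 = Gf 0)
    (h : ∀ t, F (t + 1) - F t = Gf (t + 1) - Gf t) : F = Gf := by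
  funext t
  induction t using Int.induction_on with
  | zero => exact h0
  | succ k ih =>
      have h1 := h k
      rw [ih] at h1
      exact sub_left_inj.mp h1
  | pred k ih =>
      have h1 := h (-k - 1)
      rw [sub_add_cancel, ih] at h1
      exact sub_right_inj.mp h1

lemma isum_telescope (g : ℤ → G) :
    isum (fun t => g (t + 1) - g t) = fun n => g n - g 0 := by
  apply int_ext
  · simp [isum_zero]
  · intro t
    rw [isum_step]
    abel

lemma isum_sub (h h' : ℤ → G) :
    (fun n => isum h' n - isum h n) = isum (fun t => h' t - h t) := by
  apply int_ext
  · simp [isum_zero]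
  · intro t
    rw [isum_step]
    have e1 := isum_step h t
    have e2 := isum_step h' t
    have e3 : isum h' (t + 1) - isum h (t + 1) - (isum h' t - isum h t)
        = (isum h' (t + 1) - isum h' t) - (isum h (t + 1) - isum h t) := by abel
    rw [e3, e1, e2]

end Aux

section Cons

variable {s : ℕ}

lemma cons_latUnit_zero (t : ℤ) (y : Fin s → ℤ) :
    Fin.cons t y + latUnit (0 : Fin (s + 1)) = Fin.cons (t + 1) y := by
  funext i
  refine Fin.cases ?_ (fun j => ?_) i <;>
    simp [latUnit, Pi.single_apply, Fin.succ_ne_zero]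

lemma cons_latUnit_succ (t : ℤ) (y : Fin s → ℤ) (α : Fin s) :
    Fin.cons t y + latUnit α.succ = Fin.cons t (y + latUnit α) := by
  funext i
  refine Fin.cases ?_ (fun j => ?_) i <;>
    simp [latUnit, Pi.single_apply, (Fin.succ_ne_zero α).symm, Fin.succ_inj]

lemma tail_latUnit_zero (x : Fin (s + 1) → ℤ) :
    Fin.tail (x + latUnit (0 : Fin (s + 1))) = Fin.tail x := by
  funext i
  simp [Fin.tail, latUnit, Pi.single_apply, (Fin.succ_ne_zero i)]

lemma tail_latUnit_succ (x : Fin (s + 1) → ℤ) (α : Fin s) :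
    Fin.tail (x + latUnit α.succ) = Fin.tail x + latUnit α := by
  funext i
  simp [Fin.tail, latUnit, Pi.single_apply, Fin.succ_inj]

lemma apply_zero_latUnit_zero (x : Fin (s + 1) → ℤ) :
    (x + latUnit (0 : Fin (s + 1))) 0 = x 0 + 1 := by
  simp [latUnit, Pi.single_apply]

lemma apply_zero_latUnit_succ (x : Fin (s + 1) → ℤ) (α : Fin s) :
    (x + latUnit α.succ) 0 = x 0 := by
  simp [latUnit, Pi.single_apply, (Fin.succ_ne_zero α).symm]

end Cons

theorem poincare_aux {G : Type*} [AddCommGroup G] :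
    ∀ (s : ℕ) (A : Fin s → (Fin s → ℤ) → G),
      (∀ α β, dd α (A β) = dd β (A α)) →
      ∃ χ : (Fin s → ℤ) → G, ∀ α, A α = dd α χ := by
  intro s
  induction s with
  | zero =>
      intro A _
      exact ⟨0, fun α => α.elim0⟩
  | succ s ih =>
      intro A hclosed
      set B : Fin s → (Fin s → ℤ) → G := fun α y => A α.succ (Fin.cons 0 y) with hBdef
      have hBclosed : ∀ α β, dd α (B β) = dd β (B α) := by
        intro α β
        funext y
        have h := congrFun (hclosed α.succ β.succ) (Fin.cons 0 y)
        simpa [dd, B, cons_latUnit_succ] using h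
      obtain ⟨ψ, hψ⟩ := ih B hBclosed
      refine ⟨fun x => ψ (Fin.tail x) +
        isum (fun t => A 0 (Fin.cons t (Fin.tail x))) (x 0), ?_⟩
      intro α
      refine Fin.cases ?_ (fun α => ?_) α
      · funext x
        simp only [dd, tail_latUnit_zero, apply_zero_latUnit_zero]
        rw [add_sub_add_left_eq_sub, isum_step, Fin.cons_self_tail]
      · funext x
        simp only [dd, tail_latUnit_succ, apply_zero_latUnit_succ]
        set y := Fin.tail x with hy
        set g : ℤ → G := fun t => A α.succ (Fin.cons t y) with hg
        have hd : (fun t => A 0 (Fin.cons t (y + latUnit α)) - A 0 (Fin.cons t y))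
            = fun t => g (t + 1) - g t := by
          funext t
          have h := congrFun (hclosed 0 α.succ) (Fin.cons t y)
          simp only [dd, cons_latUnit_zero, cons_latUnit_succ] at h
          simpa [g] using h.symm
        have hsub := congrFun (isum_sub (fun t => A 0 (Fin.cons t y))
          (fun t => A 0 (Fin.cons t (y + latUnit α)))) (x 0)
        have hψy := congrFun (hψ α) y
        have hcons : Fin.cons (x 0) y = x := Fin.cons_self_tail x
        have hAx : A α.succ x = g (x 0) := by simp only [g, hcons]
        have h1 : ψ (y + latUnit α) - ψ y = g 0 := by
          simp only [hBdef, dd] at hψy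
          exact hψy.symm
        have h2 : isum (fun t => A 0 (Fin.cons t (y + latUnit α))) (x 0)
            - isum (fun t => A 0 (Fin.cons t y)) (x 0) = g (x 0) - g 0 := by
          rw [hsub, hd, congrFun (isum_telescope g) (x 0)]
        have hre : ψ (y + latUnit α) + isum (fun t => A 0 (Fin.cons t (y + latUnit α))) (x 0)
            - (ψ y + isum (fun t => A 0 (Fin.cons t y)) (x 0))
            = (ψ (y + latUnit α) - ψ y)
              + (isum (fun t => A 0 (Fin.cons t (y + latUnit α))) (x 0)
                - isum (fun t => A 0 (Fin.cons t y)) (x 0)) := by abel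
        rw [hAx, hre, h1, h2]
        abel

/-- Discrete Poincaré lemma for 1-forms on `ℤ^s`: closed 1-forms are exact. -/
theorem discrete_poincare_one_forms {s : ℕ}
    (A : Fin s → (Fin s → ℤ) → Real.Angle)
    (hclosed : ∀ α β, dd α (A β) = dd β (A α)) :
    ∃ χ : (Fin s → ℤ) → Real.Angle, ∀ α, A α = dd α χ := by
  exact poincare_aux s A hclosed
end

section
/- If a U(1)-translation system on Z^s admits a second translation system S commuting with it (S_α T_β = T_β S_α for all α, β), then its plaquette phases P_{αβ}(x) are independent of x. -/
/-- Plaquette phases of a U(1)-translation system `U`. -/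
noncomputable def plaq {s : ℕ} (U : Fin s → (Fin s → ℤ) → Circle)
    (α β : Fin s) (x : Fin s → ℤ) : Circle :=
  (U α x)⁻¹ * (U β (x + latUnit α))⁻¹ * U α (x + latUnit β) * U β x

/-- If a U(1)-translation system `U` admits a commuting translation system `V`
(`S_α T_β = T_β S_α`), then its plaquette phases are independent of `x`. -/
theorem plaq_const_of_commuting_system {s : ℕ}
    (U V : Fin s → (Fin s → ℤ) → Circle)
    (hcomm : ∀ α β x, V α (x + latUnit β) * U β x = U β (x + latUnit α) * V α x) :
    ∀ α β x y, plaq U α β x = plaq U α β y := by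
  intro α β
  have step : ∀ (γ : Fin s) (x : Fin s → ℤ),
      plaq U α β (x + latUnit γ) = plaq U α β x := by
    intro γ x
    have h : ∀ δ y, U δ (y + latUnit γ) = V γ (y + latUnit δ) * U δ y * (V γ y)⁻¹ := by
      intro δ y
      rw [eq_comm, mul_inv_eq_iff_eq_mul]
      exact hcomm γ δ y
    simp only [plaq]
    rw [add_right_comm x (latUnit γ) (latUnit α), add_right_comm x (latUnit γ) (latUnit β),
      h α x, h β (x + latUnit α), h α (x + latUnit β), h β x,
      add_right_comm x (latUnit α) (latUnit β)]
    rw [← Additive.ofMul.apply_eq_iff_eq]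
    simp only [ofMul_mul, ofMul_inv]
    abel
  have stepn : ∀ (n : ℤ) (γ : Fin s) (x : Fin s → ℤ),
      plaq U α β (x + n • latUnit γ) = plaq U α β x := by
    intro n γ
    induction n using Int.induction_on with
    | zero => simp
    | succ k ih =>
        intro x
        have hx : x + ((k : ℤ) + 1) • latUnit γ = (x + (k : ℤ) • latUnit γ) + latUnit γ := by
          rw [add_smul, one_smul, add_assoc]
        rw [hx, step, ih]
    | pred k ih =>
        intro x
        have hx : x + (-(k : ℤ) - 1) • latUnit γ + latUnit γ = x + (-(k : ℤ)) • latUnit γ := by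
          rw [sub_smul, one_smul, add_assoc, sub_add_cancel]
        calc plaq U α β (x + (-(k : ℤ) - 1) • latUnit γ)
            = plaq U α β (x + (-(k : ℤ) - 1) • latUnit γ + latUnit γ) := (step γ _).symm
          _ = plaq U α β x := by rw [hx]; exact ih x
  have key : ∀ (F : Finset (Fin s)) (v : Fin s → ℤ) (x : Fin s → ℤ),
      plaq U α β (x + ∑ γ ∈ F, v γ • latUnit γ) = plaq U α β x := by
    intro F
    induction F using Finset.induction_on with
    | empty => simp
    | insert a F hnot ih =>
        intro v x
        rw [Finset.sum_insert hnot, ← add_assoc, ih, stepn]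
  intro x y
  have hv : x + ∑ γ, (y γ - x γ) • latUnit γ = y := by
    ext i
    simp [latUnit, Pi.single_apply, Finset.sum_ite_eq', mul_comm]
  calc plaq U α β x = plaq U α β (x + ∑ γ, (y γ - x γ) • latUnit γ) := (key _ _ _).symm
    _ = plaq U α β y := by rw [hv]
end

section
/- Operator ordering matters in discrete minimal coupling: for the walks W̃₁ = diag(T₁T₂, T₁*T₂*) and W̃₂ = diag(T₂T₁, T₂*T₁*) built from a U(1)-translation system with plaquette phases P₁₂(x), a gauge transformation V : Z² → U(1) with V(x)* W̃₂* V W̃₁ = 1 (componentwise, i.e. V(x+ê₁+ê₂) = P₁₂(x)* V(x) and V(x+ê₁+ê₂) = P₁₂(x) V(x)) exists if and only if P₁₂(x) ∈ {+1, −1} for all x. -/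
noncomputable def prodInt (g : ℤ → Circle) (n : ℤ) : Circle :=
  (∏ k ∈ Finset.range n.toNat, g k) * (∏ k ∈ Finset.range (-n).toNat, g (-(k+1)))⁻¹

lemma prodInt_succ (g : ℤ → Circle) (n : ℤ) :
    prodInt g (n + 1) = g n * prodInt g n := by
  rcases le_or_gt 0 n with h | h
  · unfold prodInt
    have h1 : (-(n+1)).toNat = 0 := by omega
    have h2 : (-n).toNat = 0 := by omega
    have h3 : (n+1).toNat = n.toNat + 1 := by omega
    rw [h1, h2, h3, Finset.prod_range_succ]
    have : ((n : ℤ).toNat : ℤ) = n := by omega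
    rw [this]
    simp [mul_comm]
  · unfold prodInt
    have h1 : (n+1).toNat = 0 := by omega
    have h2 : n.toNat = 0 := by omega
    have h3 : (-n).toNat = (-(n+1)).toNat + 1 := by omega
    rw [h1, h2, h3, Finset.prod_range_succ]
    have : -(((-(n+1)).toNat : ℤ) + 1) = n := by omega
    rw [this, mul_inv]
    simp [mul_comm, mul_left_comm, mul_assoc]

/-- Operator ordering matters in discrete minimal coupling: the two operator
orderings `W̃₁`, `W̃₂` are gauge equivalent iff all plaquette phases are `±1`. -/
theorem ordering_gauge_equiv_iff_pm_one (U : Fin 2 → (Fin 2 → ℤ) → Circle) :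
    (∃ V : (Fin 2 → ℤ) → Circle, ∀ x : Fin 2 → ℤ,
        V (x + latUnit 0 + latUnit 1) = (plaq U 0 1 x)⁻¹ * V x ∧
        V (x + latUnit 0 + latUnit 1) = plaq U 0 1 x * V x) ↔
      ∀ x : Fin 2 → ℤ, (plaq U 0 1 x : ℂ) = 1 ∨ (plaq U 0 1 x : ℂ) = -1 := by
  constructor
  · rintro ⟨V, hV⟩ x
    obtain ⟨h1, h2⟩ := hV x
    have h3 : (plaq U 0 1 x)⁻¹ = plaq U 0 1 x := by
      have := h1.symm.trans h2
      exact mul_right_cancel this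
    have hc : ((plaq U 0 1 x : ℂ))⁻¹ = (plaq U 0 1 x : ℂ) := by
      rw [← Circle.coe_inv, h3]
    have h4 : (plaq U 0 1 x : ℂ) * (plaq U 0 1 x : ℂ) = 1 := by
      nth_rewrite 2 [← hc]
      exact mul_inv_cancel₀ (Circle.coe_ne_zero _)
    exact mul_self_eq_one_iff.mp h4
  · intro hP
    set Q : ℤ → ℤ → Circle := fun d n => plaq U 0 1 (fun i => if i = 0 then d + n else n) with hQ
    refine ⟨fun x => prodInt (Q (x 0 - x 1)) (x 1), fun x => ?_⟩
    set y : Fin 2 → ℤ := x + latUnit 0 + latUnit 1 with hy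
    have hx0 : y 0 = x 0 + 1 := by
      simp [hy, latUnit, Pi.single]
    have hx1 : y 1 = x 1 + 1 := by
      simp [hy, latUnit, Pi.single]
    have hpt : (fun i : Fin 2 => if i = 0 then (x 0 - x 1) + x 1 else x 1) = x := by
      funext i
      fin_cases i <;> simp
    have key : prodInt (Q (y 0 - y 1)) (y 1) = plaq U 0 1 x * prodInt (Q (x 0 - x 1)) (x 1) := by
      rw [hx0, hx1]
      have : x 0 + 1 - (x 1 + 1) = x 0 - x 1 := by ring
      rw [this, prodInt_succ]
      congr 1
      rw [hQ]
      simp only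
      rw [hpt]
    have hinv : (plaq U 0 1 x)⁻¹ = plaq U 0 1 x := by
      rcases hP x with h | h
      · have : plaq U 0 1 x = 1 := by ext; simpa using h
        rw [this]; simp
      · have h2 : (plaq U 0 1 x : ℂ) * (plaq U 0 1 x : ℂ) = 1 := by rw [h]; ring
        ext
        rw [Circle.coe_inv]
        field_simp
        linear_combination -h2
    exact ⟨by rw [hinv]; exact key, key⟩
end
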